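/- arXiv:1011.1394 — 2 statements merged into one kernel-verified Lean document; each statement's English description precedes it below -/
import Mathlib

section
/- Let 0 < ε < 1/2. Then there exists a constant C (depending only on ε) such that for all real τ with |τ| > 1, the sum ∑_{k=1}^∞ k^{1-2ε} / (|k² - τ²| + |τ|) is at most C. -/
open Real Finset

lemma nat_shift_summable {q : ℝ} (hq : 1 < q) :
    Summable (fun n : ℕ => ((n : ℝ) + 1) ^ (-q)) := by
  have h : Summable (fun n : ℕ => (n : ℝ) ^ (-q)) :=
    Real.summable_nat_rpow.mpr (by linarith)
  have := (summable_nat_add_iff 1).mpr h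
  simpa using this

lemma shift_sum_bound {q : ℝ} (hq : 1 < q) :
    ∃ Cq : ℝ, ∀ t : ℝ, 1 < t →
      Summable (fun k : ℕ+ => (|(k : ℝ) - t| + 1) ^ (-q)) ∧
      (∑' k : ℕ+, (|(k : ℝ) - t| + 1) ^ (-q)) ≤ Cq := by
  have hZs := nat_shift_summable hq
  set Z := ∑' n : ℕ, ((n : ℝ) + 1) ^ (-q) with hZdef
  refine ⟨2 * Z + 2 ^ q * Z, fun t ht => ?_⟩
  set m := ⌈t⌉₊ with hm
  have htm : t ≤ (m : ℝ) := Nat.le_ceil t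
  have hmt : (m : ℝ) < t + 1 := Nat.ceil_lt_add_one (by linarith)
  have hm2 : 2 ≤ m := by
    have h1 : (1 : ℝ) < (m : ℝ) := lt_of_lt_of_le ht htm
    have : 1 < m := by exact_mod_cast h1
    omega
  have hm1R : (1 : ℝ) ≤ (m : ℝ) := by
    have : (1:ℕ) ≤ m := by omega
    exact_mod_cast this
  set F : ℕ → ℝ := fun n => (|((n : ℝ) + 1) - t| + 1) ^ (-q) with hF
  have hF0 : ∀ n, 0 ≤ F n := fun n => rpow_nonneg (by positivity) _
  have hqneg : -q ≤ 0 := by linarith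
  -- tail bound
  have htail : ∀ i : ℕ, F (i + 2 * m) ≤ 2 ^ q * ((i : ℝ) + 1) ^ (-q) := by
    intro i
    have h1 : ((i + 2 * m : ℕ) : ℝ) = (i : ℝ) + 2 * m := by push_cast; ring
    have hb : ((i : ℝ) + 1) / 2 ≤ |((i + 2 * m : ℕ) : ℝ) + 1 - t| + 1 := by
      rw [h1]
      have h3 : (i : ℝ) + 2 * m + 1 - t ≤ |(i : ℝ) + 2 * m + 1 - t| := le_abs_self _
      linarith
    have h4 := rpow_le_rpow_of_nonpos (by positivity : (0:ℝ) < ((i:ℝ)+1)/2) hb hqneg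
    calc F (i + 2 * m) ≤ (((i : ℝ) + 1) / 2) ^ (-q) := h4
      _ = ((i : ℝ) + 1) ^ (-q) / 2 ^ (-q) := Real.div_rpow (by positivity) (by norm_num) (-q)
      _ = 2 ^ q * ((i : ℝ) + 1) ^ (-q) := by
          rw [Real.rpow_neg (by norm_num : (0:ℝ) ≤ 2), div_eq_mul_inv, inv_inv]; ring
  have hsum_tail : Summable (fun i : ℕ => F (i + 2 * m)) :=
    Summable.of_nonneg_of_le (fun i => hF0 _) htail (hZs.mul_left _)
  have hFs : Summable F := (summable_nat_add_iff (2 * m)).mp hsum_tail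
  -- tail tsum
  have hta : (∑' i, F (i + 2 * m)) ≤ 2 ^ q * Z := by
    calc (∑' i, F (i + 2 * m)) ≤ ∑' i : ℕ, 2 ^ q * ((i : ℝ) + 1) ^ (-q) :=
          Summable.tsum_le_tsum htail hsum_tail (hZs.mul_left _)
      _ = 2 ^ q * Z := tsum_mul_left
  -- finite part
  have hp1 : ∑ i ∈ Ico 0 (m - 1), F i ≤ Z := by
    rw [Nat.Ico_zero_eq_range]
    calc ∑ i ∈ range (m - 1), F i
        ≤ ∑ i ∈ range (m - 1), ((m - 1 - i : ℕ) : ℝ) ^ (-q) := by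
          apply Finset.sum_le_sum
          intro i hi
          rw [Finset.mem_range] at hi
          have hcast : ((m - 1 - i : ℕ) : ℝ) = (m : ℝ) - 1 - i := by
            have h5 : i + 1 ≤ m - 1 := hi
            have : (i : ℕ) ≤ m - 1 := by omega
            push_cast [Nat.cast_sub this, Nat.cast_sub (by omega : 1 ≤ m)]
            ring
          have hiR : (i : ℝ) + 1 ≤ (m : ℝ) - 1 := by
            have : i + 1 ≤ m - 1 := hi
            have h6 : (i : ℕ) + 2 ≤ m := by omega
            have := (Nat.cast_le (α := ℝ)).mpr h6
            push_cast at this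
            linarith
          apply rpow_le_rpow_of_nonpos
          · rw [hcast]; linarith
          · rw [hcast]
            have habs : t - ((i : ℝ) + 1) ≤ |((i : ℝ) + 1) - t| := by
              rw [abs_sub_comm]; exact le_abs_self _
            linarith
          · exact hqneg
      _ = ∑ i ∈ range (m - 1), ((i : ℝ) + 1) ^ (-q) := by
          have hrefl := Finset.sum_range_reflect (fun j : ℕ => ((j : ℝ) + 1) ^ (-q)) (m - 1)
          rw [← hrefl]
          apply Finset.sum_congr rfl
          intro i hi
          rw [Finset.mem_range] at hi
          congr 1
          have h7 : m - 1 - i = (m - 1 - 1 - i) + 1 := by omega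
          rw [h7]; push_cast; ring
      _ ≤ Z := Summable.sum_le_tsum _ (fun i _ => by positivity) hZs
  have hp2 : ∑ i ∈ Ico (m - 1) (2 * m), F i ≤ Z := by
    calc ∑ i ∈ Ico (m - 1) (2 * m), F i
        ≤ ∑ i ∈ Ico (m - 1) (2 * m), ((i + 2 - m : ℕ) : ℝ) ^ (-q) := by
          apply Finset.sum_le_sum
          intro i hi
          rw [Finset.mem_Ico] at hi
          have hge : m ≤ i + 2 := by omega
          have hcast : ((i + 2 - m : ℕ) : ℝ) = (i : ℝ) + 2 - m := by
            push_cast [Nat.cast_sub hge]; ring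
          have hiR : (m : ℝ) - 1 ≤ (i : ℝ) := by
            have := (Nat.cast_le (α := ℝ)).mpr hi.1
            have h8 : ((m - 1 : ℕ) : ℝ) = (m : ℝ) - 1 := by
              push_cast [Nat.cast_sub (by omega : 1 ≤ m)]; ring
            rw [h8] at this; exact this
          apply rpow_le_rpow_of_nonpos
          · rw [hcast]; linarith
          · rw [hcast]
            have habs : ((i : ℝ) + 1) - t ≤ |((i : ℝ) + 1) - t| := le_abs_self _
            linarith
          · exact hqneg
      _ = ∑ j ∈ range (m + 1), ((j : ℝ) + 1) ^ (-q) := by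
          rw [Finset.sum_Ico_eq_sum_range]
          have h2m : 2 * m - (m - 1) = m + 1 := by omega
          rw [h2m]
          apply Finset.sum_congr rfl
          intro j hj
          congr 1
          have h9 : (m - 1 + j) + 2 - m = j + 1 := by omega
          rw [h9]; push_cast; ring
      _ ≤ Z := Summable.sum_le_tsum _ (fun i _ => by positivity) hZs
  have hsplit : ∑ i ∈ Ico 0 (m - 1), F i + ∑ i ∈ Ico (m - 1) (2 * m), F i
      = ∑ i ∈ range (2 * m), F i := by
    rw [Finset.sum_Ico_consecutive F (Nat.zero_le _) (by omega)]
    rw [Nat.Ico_zero_eq_range]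
  have hFt : (∑' n, F n) ≤ 2 * Z + 2 ^ q * Z := by
    rw [← Summable.sum_add_tsum_nat_add (2 * m) hFs]
    have := hsplit
    linarith
  -- transport to ℕ+
  have hcomp : ∀ n : ℕ,
      (fun k : ℕ+ => (|(k : ℝ) - t| + 1) ^ (-q)) (Equiv.pnatEquivNat.symm n) = F n := by
    intro n
    simp [Equiv.pnatEquivNat, Nat.succPNat, hF]
  constructor
  · rw [← Equiv.pnatEquivNat.symm.summable_iff]
    exact hFs.congr fun n => (hcomp n).symm
  · rw [← Equiv.pnatEquivNat.symm.tsum_eq (fun k : ℕ+ => (|(k : ℝ) - t| + 1) ^ (-q))]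
    calc (∑' n : ℕ, (fun k : ℕ+ => (|(k : ℝ) - t| + 1) ^ (-q)) (Equiv.pnatEquivNat.symm n))
        = ∑' n, F n := tsum_congr hcomp
      _ ≤ 2 * Z + 2 ^ q * Z := hFt

lemma pnat_rpow_summable {q : ℝ} (hq : 1 < q) :
    Summable (fun k : ℕ+ => (k : ℝ) ^ (-q)) := by
  rw [← Equiv.pnatEquivNat.symm.summable_iff]
  refine (nat_shift_summable hq).congr fun n => ?_
  simp [Equiv.pnatEquivNat, Nat.succPNat]
open Real

lemma key_pointwise {ε : ℝ} (hε0 : 0 < ε) (hε : ε < 1/2) {t : ℝ} (ht : 1 < t) (k : ℕ+) :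
    (k : ℝ) ^ (1 - 2*ε) / (|(k : ℝ)^2 - t^2| + t) ≤
      2 * ((k : ℝ) ^ (-2 : ℝ) + (|(k : ℝ) - t| + 1) ^ (-(1/(1-ε)))) := by
  set K := (k : ℝ) with hKdef
  have hK1 : (1:ℝ) ≤ K := by rw [hKdef]; exact_mod_cast k.one_le
  have hK0 : (0:ℝ) < K := by linarith
  set d := |K - t| + 1 with hddef
  have hd1 : (1:ℝ) ≤ d := by
    have := abs_nonneg (K - t); linarith
  have hd0 : (0:ℝ) < d := by linarith
  set q := 1/(1-ε) with hqdef
  have h1e : (0:ℝ) < 1 - ε := by linarith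
  have hq1 : 1 < q := by rw [hqdef, lt_div_iff₀ h1e]; linarith
  have habs : |K - t| * (K + t) = |K^2 - t^2| := by
    rw [← abs_of_pos (show (0:ℝ) < K + t by linarith), ← abs_mul]
    congr 1; ring
  have hA : K / 2 * d ≤ |K^2 - t^2| + t := by
    rw [← habs, hddef]
    rcases le_or_gt K (2*t) with h | h
    · nlinarith [abs_nonneg (K - t)]
    · have habs2 : |K - t| = K - t := abs_of_pos (by linarith)
      rw [habs2]; nlinarith
  have hden : (0:ℝ) < |K^2 - t^2| + t := by
    have := abs_nonneg (K^2 - t^2); linarith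
  have hKd : (0:ℝ) < K / 2 * d := by positivity
  have hstep1 : K ^ (1-2*ε) / (|K^2 - t^2| + t) ≤ K ^ (1-2*ε) / (K/2*d) := by
    gcongr
  have hstep2 : K ^ (1-2*ε) / (K/2*d) = 2 * (K ^ (-(2*ε)) / d) := by
    have he : K ^ (1-2*ε) = K * K ^ (-(2*ε)) := by
      rw [show (1:ℝ) - 2*ε = 1 + -(2*ε) by ring, Real.rpow_add hK0, Real.rpow_one]
    rw [he]
    field_simp
  have hstep3 : K ^ (-(2*ε)) / d ≤ K ^ (-2:ℝ) + d ^ (-q) := by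
    rcases le_or_gt (K ^ (2*(1-ε))) d with h | h
    · have hPpos : (0:ℝ) < K ^ (2*(1-ε)) := rpow_pos_of_pos hK0 _
      have h1 : K ^ (-(2*ε)) / d ≤ K ^ (-(2*ε)) / K ^ (2*(1-ε)) := by
        gcongr
      have h2 : K ^ (-(2*ε)) / K ^ (2*(1-ε)) = K ^ (-2:ℝ) := by
        rw [div_eq_mul_inv, ← Real.rpow_neg hK0.le, ← Real.rpow_add hK0]
        congr 1; ring
      have h3 : (0:ℝ) ≤ d ^ (-q) := rpow_nonneg hd0.le _
      linarith
    · have h1 : d ^ (q - 1) ≤ K ^ (2*(1-ε)*(q-1)) := by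
        rw [Real.rpow_mul hK0.le]
        exact Real.rpow_le_rpow hd0.le h.le (by linarith)
      have hexp : 2*(1-ε)*(q-1) = 2*ε := by
        rw [hqdef]; field_simp; ring
      rw [hexp] at h1
      have h2 : K ^ (-(2*ε)) ≤ d ^ (-(q-1)) := by
        rw [Real.rpow_neg hK0.le, Real.rpow_neg hd0.le]
        exact inv_anti₀ (rpow_pos_of_pos hd0 _) h1
      have h3 : K ^ (-(2*ε)) / d ≤ d ^ (-(q-1)) / d := by gcongr
      have h4 : d ^ (-(q-1)) / d = d ^ (-q) := by
        rw [div_eq_mul_inv, ← Real.rpow_neg_one d, ← Real.rpow_add hd0]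
        congr 1; ring
      have h5 : (0:ℝ) ≤ K ^ (-2:ℝ) := rpow_nonneg hK0.le _
      linarith
  calc K ^ (1-2*ε) / (|K^2 - t^2| + t) ≤ K ^ (1-2*ε) / (K/2*d) := hstep1
    _ = 2 * (K ^ (-(2*ε)) / d) := hstep2
    _ ≤ 2 * (K ^ (-2:ℝ) + d ^ (-q)) := by linarith

theorem series_bound_ksq (ε : ℝ) (hε0 : 0 < ε) (hε : ε < 1/2) :
    ∃ C : ℝ, ∀ τ : ℝ, 1 < |τ| →
      Summable (fun k : ℕ+ => (k : ℝ) ^ (1 - 2*ε) / (|(k : ℝ)^2 - τ^2| + |τ|)) ∧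
      (∑' k : ℕ+, (k : ℝ) ^ (1 - 2*ε) / (|(k : ℝ)^2 - τ^2| + |τ|)) ≤ C := by
  have h1e : (0:ℝ) < 1 - ε := by linarith
  have hq1 : 1 < 1/(1-ε) := by rw [lt_div_iff₀ h1e]; linarith
  obtain ⟨Cq, hCq⟩ := shift_sum_bound hq1
  have h2s : Summable (fun k : ℕ+ => (k : ℝ) ^ (-2:ℝ)) :=
    pnat_rpow_summable (by norm_num : (1:ℝ) < 2)
  refine ⟨2 * (∑' k : ℕ+, (k:ℝ)^(-2:ℝ)) + 2 * Cq, fun τ hτ => ?_⟩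
  obtain ⟨hSq, hTq⟩ := hCq |τ| hτ
  have hkey : ∀ k : ℕ+, (k : ℝ) ^ (1-2*ε) / (|(k:ℝ)^2 - τ^2| + |τ|) ≤
      2 * ((k:ℝ)^(-2:ℝ) + (abs ((k:ℝ) - |τ|) + 1)^(-(1/(1-ε)))) := by
    intro k
    have hkp := key_pointwise hε0 hε hτ k
    rwa [sq_abs] at hkp
  have hg : Summable (fun k : ℕ+ =>
      2 * ((k:ℝ)^(-2:ℝ) + (abs ((k:ℝ) - |τ|) + 1)^(-(1/(1-ε))))) :=
    (h2s.add hSq).mul_left 2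
  have hf0 : ∀ k : ℕ+, 0 ≤ (k:ℝ)^(1-2*ε) / (|(k:ℝ)^2 - τ^2| + |τ|) := by
    intro k
    apply div_nonneg (Real.rpow_nonneg (by positivity) _)
    have h0τ : (0:ℝ) < |τ| := by linarith
    have := abs_nonneg ((k:ℝ)^2 - τ^2)
    linarith
  have hfs : Summable (fun k : ℕ+ => (k:ℝ)^(1-2*ε)/(|(k:ℝ)^2-τ^2|+|τ|)) :=
    Summable.of_nonneg_of_le hf0 hkey hg
  refine ⟨hfs, ?_⟩
  have hZ20 : (0:ℝ) ≤ ∑' k : ℕ+, (k:ℝ)^(-2:ℝ) :=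
    tsum_nonneg fun k => Real.rpow_nonneg (by positivity) _
  calc (∑' k : ℕ+, (k:ℝ)^(1-2*ε)/(|(k:ℝ)^2-τ^2|+|τ|))
      ≤ ∑' k : ℕ+, 2 * ((k:ℝ)^(-2:ℝ) + (abs ((k:ℝ) - |τ|) + 1)^(-(1/(1-ε)))) :=
        Summable.tsum_le_tsum hkey hfs hg
    _ = 2 * ((∑' k : ℕ+, (k:ℝ)^(-2:ℝ)) +
        ∑' k : ℕ+, (abs ((k:ℝ) - |τ|) + 1)^(-(1/(1-ε)))) := by
        rw [tsum_mul_left, Summable.tsum_add h2s hSq]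
    _ ≤ 2 * (∑' k : ℕ+, (k:ℝ)^(-2:ℝ)) + 2 * Cq := by linarith
end

section
/- Let 0 < ε < 1/2. Then there exists a constant C (depending only on ε) such that for all real τ with |τ| > 1, the sum ∑_{k=1}^∞ k^{1-2ε} / (|(k-1)² - τ²| + |τ|) is at most C. -/
open Finset Real

lemma real_rpow_add_le' {x y p : ℝ} (hx : 0 ≤ x) (hy : 0 ≤ y) (hp : 0 ≤ p) (hp1 : p ≤ 1) :
    (x + y) ^ p ≤ x ^ p + y ^ p := by
  have h := NNReal.rpow_add_le_add_rpow x.toNNReal y.toNNReal hp hp1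
  have h2 := NNReal.coe_le_coe.2 h
  push_cast at h2
  rwa [Real.coe_toNNReal _ hx, Real.coe_toNNReal _ hy] at h2

lemma key_ineq' {ε : ℝ} (hε0 : 0 < ε) (hε1 : ε ≤ 1) {x : ℝ} (hx : 1 ≤ x) :
    ε * x ^ (ε - 1) ≤ x ^ ε - (x - 1) ^ ε := by
  have hx0 : 0 < x := lt_of_lt_of_le one_pos hx
  have hb : (1 + (-(1/x))) ^ ε ≤ 1 + ε * (-(1/x)) := by
    apply rpow_one_add_le_one_add_mul_self _ hε0.le hε1
    have : 1/x ≤ 1 := by rw [div_le_one hx0]; exact hx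
    linarith
  have hxx : (1 + -(1/x)) = (x - 1)/x := by field_simp; ring
  rw [hxx] at hb
  have hx1 : (0:ℝ) ≤ x - 1 := by linarith
  have hsplit : (x - 1) ^ ε = ((x-1)/x) ^ ε * x ^ ε := by
    rw [← Real.mul_rpow (by positivity) hx0.le, div_mul_cancel₀]
    exact hx0.ne'
  have hxe : 0 < x ^ ε := Real.rpow_pos_of_pos hx0 _
  have hp : x ^ (ε - 1) = x ^ ε / x := by
    rw [Real.rpow_sub hx0, Real.rpow_one]
  rw [hp, hsplit]
  have h3 := mul_le_mul_of_nonneg_right hb hxe.le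
  have h4 : (1 + ε * -(1/x)) * x ^ ε = x ^ ε - ε * (x ^ ε / x) := by ring
  linarith

lemma sum_pow_le' {ε : ℝ} (hε0 : 0 < ε) (hε1 : ε ≤ 1) {a : ℝ} (ha : 1 ≤ a) (n : ℕ) :
    ∑ j ∈ Finset.range n, (a + j) ^ (ε - 1) ≤ (a - 1 + n) ^ ε / ε := by
  induction n with
  | zero =>
      simp only [Finset.range_zero, Finset.sum_empty, Nat.cast_zero, add_zero]
      have h1 : (0:ℝ) ≤ a - 1 := by linarith
      positivity
  | succ n ih =>
      rw [Finset.sum_range_succ]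
      have hx : 1 ≤ a + n := le_add_of_le_of_nonneg ha (by positivity)
      have hk := key_ineq' hε0 hε1 hx
      have hstep : (a + n) ^ (ε-1) ≤ ((a + n) ^ ε - (a + n - 1) ^ ε)/ε := by
        rw [le_div_iff₀ hε0]; linarith [hk]
      have he : a - 1 + (n:ℝ) = a + n - 1 := by ring
      have he2 : a - 1 + ((n + 1 : ℕ) : ℝ) = a + n := by push_cast; ring
      rw [he2]
      calc ∑ j ∈ Finset.range n, (a + j) ^ (ε - 1) + (a + n) ^ (ε-1)
          ≤ (a + n - 1) ^ ε / ε + ((a + n) ^ ε - (a + n - 1) ^ ε)/ε := by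
            refine add_le_add ?_ hstep
            rw [← he]; exact ih
        _ = (a + n) ^ ε / ε := by ring

lemma sum_center' {ε t : ℝ} (hε0 : 0 < ε) (hε1 : ε ≤ 1) (ht : 1 < t) :
    ∑ i ∈ Finset.range ⌈3*t⌉₊, (|(i:ℝ) - t| + 1) ^ (ε - 1)
      ≤ ((t+1) ^ ε + (2*t+1) ^ ε) / ε := by
  have ht0 : (0:ℝ) < t := lt_trans one_pos ht
  set K := ⌈3*t⌉₊ with hK
  set k₀ := ⌈t⌉₊ with hk₀
  have hk₀K : k₀ ≤ K := Nat.ceil_le_ceil (by linarith)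
  have hk₀t : t ≤ (k₀:ℝ) := Nat.le_ceil t
  have hk₀t1 : (k₀:ℝ) < t + 1 := Nat.ceil_lt_add_one ht0.le
  have hKt : (K:ℝ) < 3*t + 1 := Nat.ceil_lt_add_one (by linarith)
  have hsplit := Finset.sum_range_add_sum_Ico
    (f := fun i : ℕ => (|(i:ℝ) - t| + 1) ^ (ε - 1)) hk₀K
  rw [← hsplit, add_div]
  have hlow : ∑ i ∈ Finset.range k₀, (|(i:ℝ) - t| + 1) ^ (ε - 1) ≤ (t+1) ^ ε / ε := by
    have h1 : ∀ i ∈ Finset.range k₀, (|(i:ℝ) - t| + 1) ^ (ε - 1)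
        = (t - (i:ℝ) + 1) ^ (ε - 1) := by
      intro i hi
      rw [Finset.mem_range, hk₀, Nat.lt_ceil] at hi
      rw [abs_of_nonpos (by linarith), neg_sub]
    rw [Finset.sum_congr rfl h1]
    set b := t - (k₀:ℝ) + 2 with hb
    have hb1 : 1 ≤ b := by rw [hb]; linarith
    have hrefl := Finset.sum_range_reflect (fun j => (b + j) ^ (ε - 1)) k₀
    have h2 : ∀ j ∈ Finset.range k₀, (b + ((k₀ - 1 - j : ℕ):ℝ)) ^ (ε - 1)
        = (t - ((j:ℕ):ℝ) + 1) ^ (ε - 1) := by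
      intro j hj
      rw [Finset.mem_range] at hj
      have hj1 : j ≤ k₀ - 1 := Nat.le_sub_one_of_lt hj
      have hk1 : 1 ≤ k₀ := Nat.one_le_iff_ne_zero.2 (by omega)
      have hc : ((k₀ - 1 - j : ℕ):ℝ) = (k₀:ℝ) - 1 - j := by
        rw [Nat.cast_sub hj1, Nat.cast_sub hk1, Nat.cast_one]
      rw [hc, hb]
      ring_nf
    have h3 : ∑ i ∈ Finset.range k₀, (t - (i:ℝ) + 1) ^ (ε - 1)
        = ∑ j ∈ Finset.range k₀, (b + (j:ℝ)) ^ (ε - 1) := by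
      rw [← hrefl]
      exact (Finset.sum_congr rfl h2).symm
    rw [h3]
    have harg : b - 1 + (k₀:ℝ) = t + 1 := by rw [hb]; ring
    calc ∑ j ∈ Finset.range k₀, (b + (j:ℝ)) ^ (ε - 1) ≤ (b - 1 + k₀) ^ ε / ε :=
          sum_pow_le' hε0 hε1 hb1 k₀
      _ = (t+1) ^ ε / ε := by rw [harg]
  have hhigh : ∑ i ∈ Finset.Ico k₀ K, (|(i:ℝ) - t| + 1) ^ (ε - 1) ≤ (2*t+1) ^ ε / ε := by
    rw [Finset.sum_Ico_eq_sum_range]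
    set a := (k₀:ℝ) - t + 1 with ha
    have ha1 : 1 ≤ a := by rw [ha]; linarith
    have h1 : ∀ j ∈ Finset.range (K - k₀), (|((k₀ + j : ℕ):ℝ) - t| + 1) ^ (ε - 1)
        = (a + (j:ℝ)) ^ (ε - 1) := by
      intro j hj
      have hc : ((k₀ + j : ℕ):ℝ) = (k₀:ℝ) + j := by push_cast; ring
      rw [hc, abs_of_nonneg (by linarith [Nat.cast_nonneg (α := ℝ) j]), ha]
      ring_nf
    rw [Finset.sum_congr rfl h1]
    calc ∑ j ∈ Finset.range (K - k₀), (a + (j:ℝ)) ^ (ε - 1)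
        ≤ (a - 1 + (K - k₀ : ℕ)) ^ ε / ε := sum_pow_le' hε0 hε1 ha1 _
      _ ≤ (2*t+1) ^ ε / ε := by
          have hc : a - 1 + ((K - k₀ : ℕ):ℝ) = (K:ℝ) - t := by
            rw [Nat.cast_sub hk₀K, ha]; ring
          rw [hc]
          have hmono : ((K:ℝ) - t) ^ ε ≤ (2*t+1) ^ ε :=
            Real.rpow_le_rpow (by linarith) (by linarith) hε0.le
          exact div_le_div_of_nonneg_right hmono hε0.le
  linarith

set_option maxHeartbeats 1000000 in
theorem series_bound_kmo_sq (ε : ℝ) (hε0 : 0 < ε) (hε : ε < 1/2) :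
    ∃ C : ℝ, ∀ τ : ℝ, 1 < |τ| →
      Summable (fun k : ℕ+ => (k : ℝ) ^ (1 - 2*ε) / (|((k : ℝ) - 1)^2 - τ^2| + |τ|)) ∧
      (∑' k : ℕ+, (k : ℝ) ^ (1 - 2*ε) / (|((k : ℝ) - 1)^2 - τ^2| + |τ|)) ≤ C := by
  have hp0 : (0:ℝ) < 1 - 2*ε := by linarith
  have hp1 : (1:ℝ) - 2*ε ≤ 1 := by linarith
  have hε1 : ε ≤ 1 := by linarith
  have hsn : Summable (fun n : ℕ => (n:ℝ) ^ (-1 - 2*ε)) :=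
    Real.summable_nat_rpow.2 (by linarith)
  have hP : Summable (fun k : ℕ+ => ((k:ℕ):ℝ) ^ (-1 - 2*ε)) :=
    hsn.comp_injective (fun a b h => PNat.coe_injective h)
  set P := ∑' k : ℕ+, ((k:ℕ):ℝ) ^ (-1 - 2*ε) with hPdef
  refine ⟨3*P + 4 + 4/ε, fun τ hτ => ?_⟩
  set t := |τ| with htdef
  have ht : 1 < t := hτ
  have ht0 : (0:ℝ) < t := lt_trans one_pos ht
  have hτ2 : τ^2 = t^2 := (sq_abs τ).symm
  set f := fun k : ℕ+ => (k:ℝ) ^ (1 - 2*ε) / (|((k:ℝ) - 1)^2 - τ^2| + |τ|) with hfdef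
  have hkc1 : ∀ k : ℕ+, (1:ℝ) ≤ (k:ℝ) := by
    intro k; exact_mod_cast k.one_le
  have hDpos : ∀ k : ℕ+, (0:ℝ) < |((k:ℝ) - 1)^2 - τ^2| + |τ| := fun k =>
    add_pos_of_nonneg_of_pos (abs_nonneg _) ht0
  have hf_nonneg : ∀ k : ℕ+, 0 ≤ f k := fun k =>
    div_nonneg (Real.rpow_nonneg (by linarith [hkc1 k]) _) (hDpos k).le
  -- denominator lower bound near
  have hD : ∀ k : ℕ+, t * (|((k:ℝ)-1) - t| + 1) ≤ |((k:ℝ) - 1)^2 - τ^2| + |τ| := by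
    intro k
    have hx : (0:ℝ) ≤ (k:ℝ) - 1 := by linarith [hkc1 k]
    have h1 : |((k:ℝ)-1)^2 - τ^2| = |((k:ℝ)-1) - t| * (((k:ℝ)-1) + t) := by
      rw [hτ2, show ((k:ℝ)-1)^2 - t^2 = (((k:ℝ)-1) - t) * (((k:ℝ)-1) + t) by ring,
        abs_mul]
      congr 1
      exact abs_of_nonneg (by linarith)
    have h2 : t * |((k:ℝ)-1) - t| ≤ |((k:ℝ)-1) - t| * (((k:ℝ)-1) + t) := by
      rw [mul_comm]
      exact mul_le_mul_of_nonneg_left (by linarith) (abs_nonneg _)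
    have h3 : t ≤ |τ| := le_of_eq htdef
    rw [h1]
    nlinarith [abs_nonneg (((k:ℝ)-1) - t)]
  -- near bound
  have hnear : ∀ k : ℕ+, f k ≤ (|((k:ℝ)-1) - t| + 1) ^ (-(2*ε)) / t
      + t ^ (-(2*ε)) * (|((k:ℝ)-1) - t| + 1) ^ (ε - 1) := by
    intro k
    set m := |((k:ℝ)-1) - t| with hm
    have hm0 : (0:ℝ) ≤ m := abs_nonneg _
    have hm1 : (1:ℝ) ≤ m + 1 := by linarith
    have hkle : (k:ℝ) ≤ (m + 1) + t := by
      have h := le_abs_self ((k:ℝ) - 1 - t)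
      rw [← hm] at h  -- careful
      linarith
    have hnum : (k:ℝ) ^ (1-2*ε) ≤ (m+1) ^ (1-2*ε) + t ^ (1-2*ε) := by
      calc (k:ℝ) ^ (1-2*ε) ≤ ((m+1) + t) ^ (1-2*ε) :=
            Real.rpow_le_rpow (by linarith [hkc1 k]) hkle hp0.le
        _ ≤ _ := real_rpow_add_le' (by linarith) ht0.le hp0.le hp1
    have step1 : f k ≤ ((m+1) ^ (1-2*ε) + t ^ (1-2*ε)) / (t * (m+1)) :=
      div_le_div₀ (by positivity) hnum (mul_pos ht0 (by linarith)) (hD k)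
    refine step1.trans ?_
    rw [add_div]
    apply add_le_add
    · have hne : (m+1) ≠ 0 := by linarith
      have heq : (m+1) ^ (1-2*ε) / (t*(m+1)) = (m+1) ^ (-(2*ε)) / t := by
        rw [show (1-2*ε) = -(2*ε) + 1 by ring, Real.rpow_add (by linarith), Real.rpow_one,
          mul_comm t (m+1), ← div_div, mul_div_cancel_right₀ _ hne]
      rw [heq]
    · have heq : t ^ (1-2*ε) / (t*(m+1)) = t ^ (-(2*ε)) * (m+1)⁻¹ := by
        rw [show (1-2*ε) = -(2*ε) + 1 by ring, Real.rpow_add ht0, Real.rpow_one,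
          ← div_div, mul_div_cancel_right₀ _ (ne_of_gt ht0), div_eq_mul_inv]
      rw [heq]
      apply mul_le_mul_of_nonneg_left ?_ (Real.rpow_nonneg ht0.le _)
      rw [← Real.rpow_neg_one (m+1)]
      exact Real.rpow_le_rpow_of_exponent_le hm1 (by linarith)
  -- far bound
  have hfar : ∀ k : ℕ+, 3*t ≤ (k:ℝ) → f k ≤ 3 * (k:ℝ) ^ (-1-2*ε) := by
    intro k hk
    have hk1 : (1:ℝ) ≤ (k:ℝ) := hkc1 k
    have hk3 : (3:ℝ) ≤ (k:ℝ) := le_trans (by linarith) hk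
    have hkpos : (0:ℝ) < (k:ℝ) := by linarith
    have hD2 : (k:ℝ)^2/3 ≤ |((k:ℝ)-1)^2 - τ^2| + |τ| := by
      have h1 : (k:ℝ)^2/3 ≤ ((k:ℝ)-1)^2 - t^2 := by nlinarith
      have h2 : ((k:ℝ)-1)^2 - t^2 ≤ |((k:ℝ)-1)^2 - τ^2| := by
        rw [hτ2]; exact le_abs_self _
      have h3 : (0:ℝ) ≤ |τ| := abs_nonneg _
      linarith
    have step1 : f k ≤ (k:ℝ) ^ (1-2*ε) / ((k:ℝ)^2/3) :=
      div_le_div_of_nonneg_left (Real.rpow_nonneg hkpos.le _) (by positivity) hD2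
    refine step1.trans (le_of_eq ?_)
    have hkey : (k:ℝ)^(-1-2*ε) = (k:ℝ)^(1-2*ε) / (k:ℝ)^2 := by
      rw [← Real.rpow_natCast (k:ℝ) 2, ← Real.rpow_sub hkpos]
      congr 1
      push_cast
      ring
    rw [hkey]
    field_simp
  -- summability
  have hsum : Summable f := by
    apply Summable.of_nonneg_of_le hf_nonneg ?_ (hP.mul_left (9*t^2+3))
    intro k
    have hrp : (0:ℝ) ≤ ((k:ℕ):ℝ) ^ (-1-2*ε) := Real.rpow_nonneg (Nat.cast_nonneg _) _
    have hcast : ((k:ℕ):ℝ) = (k:ℝ) := rfl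
    by_cases hk : 3*t ≤ (k:ℝ)
    · refine (hfar k hk).trans ?_
      rw [hcast]
      nlinarith [sq_nonneg t]
    · push_neg at hk
      have hk1 : (1:ℝ) ≤ (k:ℝ) := hkc1 k
      have hkpos : (0:ℝ) < (k:ℝ) := by linarith
      have h1 : f k ≤ (k:ℝ)^(1-2*ε) := by
        have hstep : f k ≤ (k:ℝ)^(1-2*ε)/t :=
          div_le_div_of_nonneg_left (Real.rpow_nonneg hkpos.le _) ht0
            (le_add_of_nonneg_left (abs_nonneg _))
        refine hstep.trans ?_
        rw [div_le_iff₀ ht0]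
        nlinarith [Real.rpow_nonneg hkpos.le (1-2*ε)]
      have h2 : (k:ℝ)^(1-2*ε) = (k:ℝ)^(-1-2*ε) * (k:ℝ)^2 := by
        rw [← Real.rpow_natCast (k:ℝ) 2, ← Real.rpow_add hkpos]
        congr 1
        push_cast
        ring
      have h3 : (k:ℝ)^2 ≤ 9*t^2 := by nlinarith
      rw [hcast]
      calc f k ≤ (k:ℝ)^(-1-2*ε) * (k:ℝ)^2 := by rw [← h2]; exact h1
        _ ≤ (9*t^2+3) * (k:ℝ)^(-1-2*ε) := by
            rw [hcast] at hrp
            nlinarith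
  refine ⟨hsum, Summable.tsum_le_of_sum_le hsum fun s => ?_⟩
  rw [← Finset.sum_filter_add_sum_filter_not s (fun k : ℕ+ => ((k:ℕ):ℝ) < 3*t) f]
  have hfarsum : ∑ k ∈ s.filter (fun k : ℕ+ => ¬((k:ℕ):ℝ) < 3*t), f k ≤ 3*P := by
    calc ∑ k ∈ s.filter (fun k : ℕ+ => ¬((k:ℕ):ℝ) < 3*t), f k
        ≤ ∑ k ∈ s.filter (fun k : ℕ+ => ¬((k:ℕ):ℝ) < 3*t), 3*((k:ℕ):ℝ)^(-1-2*ε) :=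
          Finset.sum_le_sum (fun k hk =>
            hfar k (not_lt.1 (Finset.mem_filter.1 hk).2))
      _ = 3 * ∑ k ∈ s.filter (fun k : ℕ+ => ¬((k:ℕ):ℝ) < 3*t), ((k:ℕ):ℝ)^(-1-2*ε) := by
          rw [Finset.mul_sum]
      _ ≤ 3 * P := by
          apply mul_le_mul_of_nonneg_left ?_ (by norm_num)
          exact Summable.sum_le_tsum _ (fun k _ => Real.rpow_nonneg (Nat.cast_nonneg _) _) hP
  have hnearsum : ∑ k ∈ s.filter (fun k : ℕ+ => ((k:ℕ):ℝ) < 3*t), f k ≤ 4 + 4/ε := by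
    set s₁ := s.filter (fun k : ℕ+ => ((k:ℕ):ℝ) < 3*t) with hs₁
    set G : ℕ → ℝ := fun i => (|(i:ℝ) - t| + 1) ^ (-(2*ε)) / t
        + t ^ (-(2*ε)) * (|(i:ℝ) - t| + 1) ^ (ε - 1) with hG
    have hGnonneg : ∀ i : ℕ, 0 ≤ G i := by
      intro i
      apply add_nonneg
      · exact div_nonneg (Real.rpow_nonneg (by positivity) _) ht0.le
      · exact mul_nonneg (Real.rpow_nonneg ht0.le _) (Real.rpow_nonneg (by positivity) _)
    have hcastp : ∀ k : ℕ+, ((k.natPred):ℝ) = (k:ℝ) - 1 := by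
      intro k
      have hpk : k.natPred + 1 = (k:ℕ) := k.natPred_add_one
      have : ((k.natPred:ℕ):ℝ) + 1 = ((k:ℕ):ℝ) := by exact_mod_cast congrArg (Nat.cast (R := ℝ)) hpk
      linarith [this]
    have hGk : ∀ k : ℕ+, G k.natPred = (|((k:ℝ)-1) - t| + 1) ^ (-(2*ε)) / t
        + t ^ (-(2*ε)) * (|((k:ℝ)-1) - t| + 1) ^ (ε - 1) := by
      intro k
      simp only [hG]
      rw [hcastp k]
    set K := ⌈3*t⌉₊ with hK
    have hKb : (K:ℝ) < 3*t+1 := Nat.ceil_lt_add_one (by linarith)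
    have h1 : ∑ k ∈ s₁, f k ≤ ∑ k ∈ s₁, G k.natPred := by
      apply Finset.sum_le_sum
      intro k _
      rw [hGk k]
      exact hnear k
    have h2 : ∑ k ∈ s₁, G k.natPred = ∑ i ∈ s₁.image PNat.natPred, G i :=
      (Finset.sum_image (fun x _ y _ h => PNat.natPred_injective h)).symm
    have h3 : s₁.image PNat.natPred ⊆ Finset.range K := by
      intro i hi
      rw [Finset.mem_image] at hi
      obtain ⟨k, hk, rfl⟩ := hi
      have hk3 : ((k:ℕ):ℝ) < 3*t := by
        have := (Finset.mem_filter.1 hk).2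
        simpa using this
      rw [Finset.mem_range, hK, Nat.lt_ceil]
      rw [hcastp k]
      linarith
    have h4 : ∑ i ∈ s₁.image PNat.natPred, G i ≤ ∑ i ∈ Finset.range K, G i :=
      Finset.sum_le_sum_of_subset_of_nonneg h3 (fun i _ _ => hGnonneg i)
    have hsplitG : ∑ i ∈ Finset.range K, G i
        = (∑ i ∈ Finset.range K, (|(i:ℝ)-t|+1)^(-(2*ε))/t)
          + ∑ i ∈ Finset.range K, t^(-(2*ε)) * (|(i:ℝ)-t|+1)^(ε-1) := by
      simp only [hG]
      rw [Finset.sum_add_distrib]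
    have hT1 : ∑ i ∈ Finset.range K, (|(i:ℝ)-t|+1)^(-(2*ε))/t ≤ 4 := by
      have heach : ∀ i ∈ Finset.range K, (|(i:ℝ)-t|+1)^(-(2*ε))/t ≤ 1/t := by
        intro i _
        apply div_le_div_of_nonneg_right ?_ ht0.le
        apply Real.rpow_le_one_of_one_le_of_nonpos
        · linarith [abs_nonneg ((i:ℝ) - t)]
        · linarith
      calc ∑ i ∈ Finset.range K, (|(i:ℝ)-t|+1)^(-(2*ε))/t
          ≤ (Finset.range K).card • (1/t) := Finset.sum_le_card_nsmul _ _ _ heach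
        _ = (K:ℝ) * (1/t) := by rw [Finset.card_range, nsmul_eq_mul]
        _ ≤ 4 := by
            rw [mul_one_div, div_le_iff₀ ht0]
            linarith
    have hT2 : ∑ i ∈ Finset.range K, t^(-(2*ε)) * (|(i:ℝ)-t|+1)^(ε-1) ≤ 4/ε := by
      rw [← Finset.mul_sum]
      have hsc := sum_center' hε0 hε1 ht
      have hstep : t^(-(2*ε)) * (∑ i ∈ Finset.range K, (|(i:ℝ)-t|+1)^(ε-1))
          ≤ t^(-(2*ε)) * (((t+1)^ε + (2*t+1)^ε)/ε) :=
        mul_le_mul_of_nonneg_left hsc (Real.rpow_nonneg ht0.le _)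
      refine hstep.trans ?_
      rw [← mul_div_assoc]
      apply div_le_div_of_nonneg_right ?_ hε0.le
      have h41 : (t+1)^ε ≤ 4^ε * t^ε := by
        rw [← Real.mul_rpow (by norm_num) ht0.le]
        exact Real.rpow_le_rpow (by linarith) (by linarith) hε0.le
      have h42 : (2*t+1)^ε ≤ 4^ε * t^ε := by
        rw [← Real.mul_rpow (by norm_num) ht0.le]
        exact Real.rpow_le_rpow (by linarith) (by linarith) hε0.le
      have h43 : t^(-(2*ε)) * t^ε = t^(-ε) := by
        rw [← Real.rpow_add ht0]
        congr 1
        ring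
      have h44 : t^(-ε) ≤ 1 := Real.rpow_le_one_of_one_le_of_nonpos ht.le (by linarith)
      have h45 : (4:ℝ)^ε ≤ 2 := by
        have ha : (4:ℝ)^ε ≤ (4:ℝ)^(1/2:ℝ) :=
          Real.rpow_le_rpow_of_exponent_le (by norm_num) hε.le
        have hb : (4:ℝ)^(1/2:ℝ) = 2 := by
          rw [show (4:ℝ) = 2^2 by norm_num, ← Real.rpow_natCast 2 2,
            ← Real.rpow_mul (by norm_num)]
          norm_num
        linarith
      have hrt : 0 ≤ t^(-(2*ε)) := Real.rpow_nonneg ht0.le _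
      have hrt2 : 0 ≤ t^(-ε) := Real.rpow_nonneg ht0.le _
      have hrt3 : 0 ≤ (4:ℝ)^ε := Real.rpow_nonneg (by norm_num) _
      have hsum2 : (t+1)^ε + (2*t+1)^ε ≤ 2*(4^ε * t^ε) := by linarith
      have hprod : (4:ℝ)^ε * t^(-ε) ≤ 2 * 1 :=
        mul_le_mul h45 h44 hrt2 (by norm_num)
      calc t^(-(2*ε)) * ((t+1)^ε + (2*t+1)^ε)
          ≤ t^(-(2*ε)) * (2*(4^ε * t^ε)) := mul_le_mul_of_nonneg_left hsum2 hrt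
        _ = 2 * (4^ε * (t^(-(2*ε)) * t^ε)) := by ring
        _ = 2 * (4^ε * t^(-ε)) := by rw [h43]
        _ ≤ 4 := by linarith
    calc ∑ k ∈ s₁, f k ≤ ∑ i ∈ Finset.range K, G i :=
          le_trans h1 (le_trans (le_of_eq h2) h4)
      _ ≤ 4 + 4/ε := by rw [hsplitG]; linarith
  linarith
end
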